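/- Let w be a fully commutative element of W(Ã_n) (n ≥ 2) with a_{n+1} ∈ Supp(w), and suppose w admits a reduced expression of the form w = u_1 (σ_n σ_{n−1} ⋯ σ_2 σ_1 a_{n+1}) u' where u_1 ∈ W(A_n) and the shown occurrence of a_{n+1} is not the last one in the expression. If u_1 is full with σ_n on the left (i.e., u_1 = σ_n σ_{n−1} ⋯ σ_2 σ_1), then every full factor between consecutive occurrences of a_{n+1} in w equals σ_n σ_{n−1} ⋯ σ_2 σ_1, i.e., w = (σ_n σ_{n−1} ⋯ σ_2 σ_1 a_{n+1})^m u_{m+1} with u_{m+1} ∈ {1} ∪ {σ_n σ_{n−1} ⋯ σ_i : 1 ≤ i ≤ n}. -/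

import Mathlib

open CoxeterSystem

/-- The Coxeter matrix of affine type Ãₙ: generators indexed by `Fin (n+1)` arranged in a
cycle (index `k` is `σ_{k+1}` for `k < n`, and index `n` is `a_{n+1}`); cyclically adjacent
generators braid with order 3, and all other pairs commute. -/
def affineAMatrix (n : ℕ) : CoxeterMatrix (Fin (n + 1)) where
  M := Matrix.of fun i j : Fin (n + 1) =>
    if i = j then 1 else if i - j = 1 ∨ j - i = 1 then 3 else 2
  isSymm := by
    unfold Matrix.IsSymm
    ext i j
    simp only [Matrix.transpose_apply, Matrix.of_apply]
    by_cases h : i = j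
    · simp [h]
    · simp [h, Ne.symm h, or_comm]
  diagonal := by simp
  off_diagonal := by aesop

def CommMove {B : Type*} (M : CoxeterMatrix B) (ω₁ ω₂ : List B) : Prop :=
  ∃ (l r : List B) (s t : B), M s t = 2 ∧ ω₁ = l ++ s :: t :: r ∧ ω₂ = l ++ t :: s :: r

def CommEquiv {B : Type*} (M : CoxeterMatrix B) : List B → List B → Prop :=
  Relation.ReflTransGen (CommMove M)

def IsRedexOf {B W : Type*} [Group W] {M : CoxeterMatrix B} (cs : CoxeterSystem M W)
    (ω : List B) (w : W) : Prop :=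
  cs.wordProd ω = w ∧ cs.IsReduced ω

def IsFC {B W : Type*} [Group W] {M : CoxeterMatrix B} (cs : CoxeterSystem M W) (w : W) : Prop :=
  ∀ ω₁ ω₂, IsRedexOf cs ω₁ w → IsRedexOf cs ω₂ w → CommEquiv M ω₁ ω₂

/-- The decreasing word `[i, i-1, ..., j]` of (1-based) generator subscripts. -/
def decW (i j : ℕ) : List ℕ := (List.range' j (i + 1 - j)).reverse

/-- The increasing word `[i, i+1, ..., j]` of (1-based) generator subscripts. -/
def incW (i j : ℕ) : List ℕ := List.range' i (j + 1 - i)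

open Fin.NatCast

/-!
Label the generators cyclically by `Fin (n + 1)`, so that `σₙ σₙ₋₁ ⋯ σ₁ a_{n+1}` becomes the
cyclically descending run `n - 1, n - 2, …, 0, n`. In a reduced expression of a fully
commutative element, a descending run of length at least `n` can only be continued by the next
letter of the run: if the next letter `c` lies `j ≥ 1` steps back in the run, then either
`j = 1` and `c c` is a factor, or `c` commutes leftwards past the last `j - 2` letters of the run
and produces a factor `c (c - 1) c`. Its braid move gives a reduced expression with a different
number of `c`'s, which is therefore not commutation equivalent to the first one. So the whole
expression is a single descending run, i.e. a power of `σₙ ⋯ σ₁ a_{n+1}` followed by a prefix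
of it.
-/

namespace CoxeterSystem

variable {B W : Type*} [Group W] {M : CoxeterMatrix B} (cs : CoxeterSystem M W)

theorem wordProd_append_append_congr (l r : List B) {u v : List B}
    (h : cs.wordProd u = cs.wordProd v) :
    cs.wordProd (l ++ u ++ r) = cs.wordProd (l ++ v ++ r) := by
  simp only [wordProd_append, h]

variable {cs}

theorem IsReduced.infix {ω ω' : List B} (hω : cs.IsReduced ω) (h : ω' <:+: ω) :
    cs.IsReduced ω' := by
  obtain ⟨l, r, rfl⟩ := h
  simpa using (hω.drop l.length).take ω'.length

theorem IsReduced.not_infix_pair {ω : List B} (hω : cs.IsReduced ω) (s : B) :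
    ¬ [s, s] <:+: ω := fun h =>
  cs.not_isReduced_alternatingWord s s (m := 2) (by simp) (by simp) (hω.infix h)

end CoxeterSystem

section Commutation

open CoxeterSystem

variable {B W : Type*} [Group W] {M : CoxeterMatrix B} {cs : CoxeterSystem M W}
  {ω₁ ω₂ : List B} {w : W}

theorem IsRedexOf.replace_infix {l r u v : List B} (hω : IsRedexOf cs (l ++ u ++ r) w)
    (hprod : cs.wordProd u = cs.wordProd v) (hlen : u.length = v.length) :
    IsRedexOf cs (l ++ v ++ r) w := by
  have hprod' := cs.wordProd_append_append_congr l r hprod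
  refine ⟨hprod'.symm.trans hω.1, ?_⟩
  rw [CoxeterSystem.IsReduced, ← hprod', hω.2]
  simp [hlen]

theorem CommMove.perm (h : CommMove M ω₁ ω₂) : ω₁.Perm ω₂ := by
  obtain ⟨l, r, s, t, -, rfl, rfl⟩ := h
  exact (List.Perm.swap t s r).append_left l

variable (cs) in
theorem CommMove.wordProd_eq (h : CommMove M ω₁ ω₂) :
    cs.wordProd ω₁ = cs.wordProd ω₂ := by
  obtain ⟨l, r, s, t, hst, rfl, rfl⟩ := h
  have hcomm := cs.wordProd_braidWord_eq s t
  rw [braidWord, braidWord, M.symmetric t s, hst] at hcomm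
  simpa [alternatingWord] using cs.wordProd_append_append_congr l r hcomm

theorem CommEquiv.perm (h : CommEquiv M ω₁ ω₂) : ω₁.Perm ω₂ := by
  induction h with
  | refl => rfl
  | tail _ hmove ih => exact ih.trans hmove.perm

variable (cs) in
theorem CommEquiv.wordProd_eq (h : CommEquiv M ω₁ ω₂) :
    cs.wordProd ω₁ = cs.wordProd ω₂ := by
  induction h with
  | refl => rfl
  | tail _ hmove ih => exact ih.trans (hmove.wordProd_eq cs)

theorem IsRedexOf.of_commEquiv (hω : IsRedexOf cs ω₁ w) (h : CommEquiv M ω₁ ω₂) :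
    IsRedexOf cs ω₂ w := by
  simpa using IsRedexOf.replace_infix (l := []) (r := []) (by simpa using hω)
    (h.wordProd_eq cs) h.perm.length_eq

theorem commEquiv_append_cons_of_commute (l r mid : List B) {c : B}
    (h : ∀ x ∈ mid, M x c = 2) : CommEquiv M (l ++ mid ++ c :: r) (l ++ c :: (mid ++ r)) := by
  induction mid generalizing l with
  | nil =>
    simp only [List.append_nil, List.nil_append]
    exact Relation.ReflTransGen.refl
  | cons x mid ih =>
    have hmove : CommMove M (l ++ x :: c :: (mid ++ r)) (l ++ c :: x :: (mid ++ r)) :=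
      ⟨l, mid ++ r, x, c, h x List.mem_cons_self, rfl, rfl⟩
    have := ih (l ++ [x]) fun y hy => h y (List.mem_cons_of_mem x hy)
    simp only [List.append_assoc, List.cons_append, List.nil_append] at this ⊢
    exact this.tail hmove

theorem IsFC.not_isRedexOf_braid [DecidableEq B] (hw : IsFC cs w) {a b : B} (hab : M a b = 3)
    (l r : List B) : ¬ IsRedexOf cs (l ++ a :: b :: a :: r) w := by
  intro hω
  have hne : a ≠ b := by rintro rfl; simp at hab
  have hbraid := cs.wordProd_braidWord_eq b a
  rw [braidWord, braidWord, M.symmetric b a, hab] at hbraid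
  have hω' := IsRedexOf.replace_infix (l := l) (r := r)
    (by simpa [alternatingWord] using hω) hbraid rfl
  have := (hw _ _ hω (by simpa [alternatingWord] using hω')).perm.count_eq a
  simp [hne.symm] at this

end Commutation

section AffineA

open Fin.CommRing

variable {n : ℕ}

def descChain (s : Fin (n + 1)) (t : ℕ) : List (Fin (n + 1)) :=
  (List.range t).map fun k : ℕ => s - (k : Fin (n + 1))

theorem mem_descChain {s x : Fin (n + 1)} {t : ℕ} :
    x ∈ descChain s t ↔ ∃ k < t, s - (k : Fin (n + 1)) = x := by
  simp [descChain]

theorem descChain_add (s : Fin (n + 1)) (a b : ℕ) :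
    descChain s (a + b) = descChain s a ++ descChain (s - (a : Fin (n + 1))) b := by
  simp only [descChain, List.range_add, List.map_append, List.map_map]
  congr 1
  refine List.map_congr_left fun k _ => ?_
  simp only [Function.comp_apply, Nat.cast_add]
  ring

@[simp] theorem descChain_one (s : Fin (n + 1)) : descChain s 1 = [s] := by
  simp [descChain]

theorem descChain_succ (s : Fin (n + 1)) (t : ℕ) :
    descChain s (t + 1) = descChain s t ++ [s - (t : Fin (n + 1))] := by
  rw [descChain_add, descChain_one]

theorem descChain_succ' (s : Fin (n + 1)) (t : ℕ) :
    descChain s (t + 1) = s :: descChain (s - 1) t := by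
  rw [Nat.add_comm t 1, descChain_add, descChain_one, Nat.cast_one, List.singleton_append]

theorem descChain_mul_add (s : Fin (n + 1)) (m r : ℕ) :
    descChain s ((n + 1) * m + r) =
      (List.replicate m (descChain s (n + 1))).flatten ++ descChain s r := by
  induction m with
  | zero => simp
  | succ m ih =>
    rw [mul_add_one, add_comm _ (n + 1), add_assoc, descChain_add, Fin.natCast_self, sub_zero,
      ih, List.replicate_succ, List.flatten_cons, List.append_assoc]

theorem affineAMatrix_sub_one (hn : 1 ≤ n) (x : Fin (n + 1)) : affineAMatrix n x (x - 1) = 3 := by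
  have hne : x ≠ x - 1 := by
    rw [Ne, eq_comm, sub_eq_self, Fin.ext_iff, Fin.val_one', Fin.val_zero,
      Nat.mod_eq_of_lt (by omega)]
    omega
  simp [affineAMatrix, hne]

theorem affineAMatrix_sub_natCast {d : ℕ} (hd : 2 ≤ d) (hdn : d < n) (x : Fin (n + 1)) :
    affineAMatrix n (x - d) x = 2 := by
  have hval : ((d : Fin (n + 1)) : ℕ) = d := Fin.val_cast_of_lt (by omega)
  have h0 : x - d ≠ x := by
    rw [Ne, sub_eq_self, Fin.ext_iff, hval, Fin.val_zero]
    omega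
  have h1 : -(d : Fin (n + 1)) ≠ 1 := by
    rw [Ne, neg_eq_iff_eq_neg, Fin.ext_iff, hval, Fin.coe_neg_one]
    omega
  have h2 : (d : Fin (n + 1)) ≠ 1 := by
    rw [Ne, Fin.ext_iff, hval, Fin.val_one', Nat.mod_eq_of_lt (by omega)]
    omega
  simp [affineAMatrix, h0, h1, h2]

section

variable {W : Type*} [Group W] {cs : CoxeterSystem (affineAMatrix n) W} {w : W}

theorem IsFC.eq_sub_of_isRedexOf_descChain_append_cons (hw : IsFC cs w) {s c : Fin (n + 1)}
    {t : ℕ} (ht : n ≤ t) {q : List (Fin (n + 1))}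
    (hω : IsRedexOf cs (descChain s t ++ c :: q) w) : c = s - (t : Fin (n + 1)) := by
  obtain ⟨j, hj, rfl⟩ : ∃ j ≤ n, c = s - (t : Fin (n + 1)) + (j : Fin (n + 1)) :=
    ⟨(c - (s - t)).val, Nat.lt_succ_iff.mp (c - (s - t)).isLt, by simp⟩
  have hsplit : descChain s t =
      descChain s (t - j) ++ descChain (s - (t : Fin (n + 1)) + (j : Fin (n + 1))) j := by
    conv_lhs => rw [← Nat.sub_add_cancel (hj.trans ht)]
    rw [descChain_add, Nat.cast_sub (hj.trans ht), sub_sub_eq_add_sub, add_sub_right_comm]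
  rw [hsplit] at hω
  rcases j with _ | _ | j
  · simp
  all_goals exfalso; generalize s - (t : Fin (n + 1)) + _ = c at hω
  · exact hω.2.not_infix_pair c ⟨descChain s (t - 1), q, by simp⟩
  rw [descChain_succ', descChain_succ'] at hω
  have hmid : ∀ x ∈ descChain (c - 1 - 1) j, affineAMatrix n x c = 2 := by
    simp only [mem_descChain]
    rintro x ⟨k, hk, rfl⟩
    convert affineAMatrix_sub_natCast (d := k + 2) (by omega) (by omega) c using 2
    push_cast
    ring
  set pre := descChain s (t - (j + 2))
  have hbraid : IsRedexOf cs (pre ++ [c, c - 1] ++ c :: (descChain (c - 1 - 1) j ++ q)) w := by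
    refine IsRedexOf.of_commEquiv ?_ (commEquiv_append_cons_of_commute _ q _ hmid)
    simpa using hω
  exact hw.not_isRedexOf_braid (affineAMatrix_sub_one (by omega) c) pre _ (by simpa using hbraid)

theorem IsFC.descChain_append_eq (hw : IsFC cs w) (s : Fin (n + 1)) (q : List (Fin (n + 1))) :
    ∀ {t : ℕ}, n ≤ t → IsRedexOf cs (descChain s t ++ q) w →
      descChain s t ++ q = descChain s (t + q.length) := by
  induction q with
  | nil => simp
  | cons c q ih =>
    intro t ht hω
    obtain rfl := hw.eq_sub_of_isRedexOf_descChain_append_cons ht hω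
    have hcons : descChain s t ++ (s - (t : Fin (n + 1))) :: q = descChain s (t + 1) ++ q := by
      simp [descChain_succ]
    rw [hcons] at hω ⊢
    rw [ih (by omega) hω, List.length_cons, add_assoc, add_comm 1]

end

theorem map_decW {i : ℕ} (hi : 1 ≤ i) :
    (decW n i).map (fun k => ((k - 1 : ℕ) : Fin (n + 1))) =
      descChain ((n - 1 : ℕ) : Fin (n + 1)) (n + 1 - i) := by
  simp only [decW, descChain, List.reverse_range', List.map_map]
  refine List.map_congr_left fun k hk => ?_
  rw [List.mem_range] at hk
  rw [Function.comp_apply, ← Nat.cast_sub (by omega)]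
  congr 1
  omega

theorem map_decW_one_append :
    (decW n 1 ++ [n + 1]).map (fun k => ((k - 1 : ℕ) : Fin (n + 1))) =
      descChain ((n - 1 : ℕ) : Fin (n + 1)) (n + 1) := by
  have hlast : ((n - 1 : ℕ) : Fin (n + 1)) - (n : Fin (n + 1)) = n := by
    rcases Nat.eq_zero_or_pos n with rfl | hn
    · rfl
    · rw [Nat.cast_sub hn, Nat.cast_one, sub_sub_cancel_left, neg_eq_iff_add_eq_zero,
        add_comm (1 : Fin (n + 1))]
      exact_mod_cast Fin.natCast_self (n + 1)
  rw [List.map_append, map_decW le_rfl, descChain_succ, hlast]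
  simp

end AffineA

/-- The (1-based) subscript `k` corresponds to the generator `k - 1 : Fin (n+1)`, with
`a_{n+1}` being subscript `n + 1`. -/
theorem fc_sigma_left_form_general (n : ℕ) {W : Type*} [Group W]
    (cs : CoxeterSystem (affineAMatrix n) W) (w : W) (hw : IsFC cs w)
    (rest : List ℕ)
    (hred : IsRedexOf cs
      ((decW n 1 ++ [n + 1] ++ rest).map fun k => ((k - 1 : ℕ) : Fin (n + 1))) w) :
    ∃ m : ℕ, ∃ tail : List ℕ,
      (tail = [] ∨ ∃ i, 1 ≤ i ∧ i ≤ n ∧ tail = decW n i) ∧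
      w = cs.wordProd (((List.replicate m (decW n 1 ++ [n + 1])).flatten ++ tail).map
        fun k => ((k - 1 : ℕ) : Fin (n + 1))) := by
  rw [List.map_append, map_decW_one_append] at hred
  have hchain := hw.descChain_append_eq _ _ (Nat.le_succ n) hred
  rw [List.length_map] at hchain
  obtain ⟨m, r, hr, hlen⟩ : ∃ m r, r < n + 1 ∧ n + 1 + rest.length = (n + 1) * m + r :=
    ⟨_, _, Nat.mod_lt _ n.succ_pos, (Nat.div_add_mod _ (n + 1)).symm⟩
  refine ⟨m, decW n (n + 1 - r), ?_, ?_⟩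
  · rcases Nat.eq_zero_or_pos r with rfl | hr0
    · simp [decW]
    · exact Or.inr ⟨_, by omega, by omega, rfl⟩
  · rw [← hred.1, hchain, hlen, descChain_mul_add, List.map_append, List.map_flatten,
      List.map_replicate, map_decW_one_append, map_decW (by omega), Nat.sub_sub_self hr.le]

/-- Let `w ∈ W(Ãₙ)` (`n ≥ 2`) be fully commutative with a reduced expression beginning
`σₙ σₙ₋₁ ⋯ σ₂ σ₁ a_{n+1}` in which the shown occurrence of `a_{n+1}` is not the last one.
Then `w = (σₙ σₙ₋₁ ⋯ σ₁ a_{n+1})^m u` for some `m` with `u = 1` or `u = σₙ σₙ₋₁ ⋯ σᵢ`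
(`1 ≤ i ≤ n`).  The (1-based) subscript `k` corresponds to the generator
`k - 1 : Fin (n+1)`, with `a_{n+1}` being subscript `n + 1`. -/
theorem fc_sigma_left_form (n : ℕ) (hn : 2 ≤ n) {W : Type*} [Group W]
    (cs : CoxeterSystem (affineAMatrix n) W) (w : W) (hw : IsFC cs w)
    (rest : List ℕ) (hrest : (n + 1) ∈ rest)
    (hred : IsRedexOf cs
      ((decW n 1 ++ [n + 1] ++ rest).map fun k => ((k - 1 : ℕ) : Fin (n + 1))) w) :
    ∃ m : ℕ, ∃ tail : List ℕ,
      (tail = [] ∨ ∃ i, 1 ≤ i ∧ i ≤ n ∧ tail = decW n i) ∧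
      w = cs.wordProd (((List.replicate m (decW n 1 ++ [n + 1])).flatten ++ tail).map
        fun k => ((k - 1 : ℕ) : Fin (n + 1))) :=
  fc_sigma_left_form_general n cs w hw rest hred
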